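/- arXiv:2405.03517 — 3 statements merged into one kernel-verified Lean document; each statement's English description precedes it below -/
import Mathlib

section
/- Let B = (B₁,...,B_d) be a bistochastic tuple of n×n complex matrices and p ≥ q ≥ 1. Then h_{S_p}(B) ≥ (h_{S_q}(B))^{p/q}. -/
open scoped BigOperators
open Matrix Finset
open scoped ComplexOrder

/-- Singular values of a complex square matrix: square roots of eigenvalues of `Mᴴ * M`. -/
noncomputable def singVals {n : ℕ} (M : Matrix (Fin n) (Fin n) ℂ) : Fin n → ℝ :=
  fun l => Real.sqrt ((Matrix.posSemidef_conjTranspose_mul_self M).1.eigenvalues l)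

/-- Schatten-`p` expansion of a tuple of matrices. -/
noncomputable def hSp {d n : ℕ} (B : Fin d → Matrix (Fin n) (Fin n) ℂ) (p : ℝ) : ℝ :=
  sInf { x : ℝ | ∃ P : Matrix (Fin n) (Fin n) ℂ, Pᴴ = P ∧ P * P = P ∧
    1 ≤ P.rank ∧ 2 * P.rank ≤ n ∧
    x = (∑ i, ∑ l, singVals (P * B i * (1 - P)) l ^ p) / (d * P.rank) }

lemma singVals_nonneg {n : ℕ} (M : Matrix (Fin n) (Fin n) ℂ) (l : Fin n) :
    0 ≤ singVals M l := Real.sqrt_nonneg _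

/-- Power-mean/Jensen: for nonnegative `a` on `s` and `r ≥ 1`,
`(∑ a)^r ≤ |s|^(r-1) * ∑ a^r`. -/
lemma sum_rpow_le {ι : Type*} (s : Finset ι) (a : ι → ℝ) (ha : ∀ i ∈ s, 0 ≤ a i)
    {r : ℝ} (hr : 1 ≤ r) :
    (∑ i ∈ s, a i) ^ r ≤ (s.card : ℝ) ^ (r - 1) * ∑ i ∈ s, a i ^ r := by
  rcases s.eq_empty_or_nonempty with h | h
  · simp [h, Real.zero_rpow (by linarith : r ≠ 0)]
  · have hN : (0:ℝ) < s.card := by exact_mod_cast h.card_pos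
    have key := Real.rpow_arith_mean_le_arith_mean_rpow s (fun _ => ((s.card : ℝ))⁻¹) a
      (fun i _ => by positivity) (by
        rw [Finset.sum_const, nsmul_eq_mul]
        field_simp) ha hr
    rw [← Finset.mul_sum, ← Finset.mul_sum,
      Real.mul_rpow (by positivity) (Finset.sum_nonneg ha)] at key
    have h2 := mul_le_mul_of_nonneg_left key (le_of_lt (Real.rpow_pos_of_pos hN r))
    have e1 : ((s.card:ℝ)) ^ r * (((s.card:ℝ))⁻¹ ^ r * (∑ i ∈ s, a i) ^ r)
        = (∑ i ∈ s, a i) ^ r := by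
      rw [← mul_assoc, ← Real.mul_rpow (le_of_lt hN) (by positivity),
        mul_inv_cancel₀ (ne_of_gt hN), Real.one_rpow, one_mul]
    have e2 : ((s.card:ℝ)) ^ r * (((s.card:ℝ))⁻¹ * ∑ i ∈ s, a i ^ r)
        = ((s.card:ℝ)) ^ (r - 1) * ∑ i ∈ s, a i ^ r := by
      rw [← mul_assoc, Real.rpow_sub hN, Real.rpow_one, div_eq_mul_inv]
    rw [e1, e2] at h2
    exact h2

/-- The number of nonzero singular values of `M` equals the rank of `M`. -/
lemma card_singVals_ne_zero {n : ℕ} (M : Matrix (Fin n) (Fin n) ℂ) :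
    (Finset.univ.filter (fun l => singVals M l ≠ 0)).card = M.rank := by
  have hH := (Matrix.posSemidef_conjTranspose_mul_self M).1
  have h1 : (Mᴴ * M).rank = Fintype.card {l // hH.eigenvalues l ≠ 0} :=
    hH.rank_eq_card_non_zero_eigs
  have h2 : (Mᴴ * M).rank = M.rank := M.rank_conjTranspose_mul_self
  rw [← h2, h1, Fintype.card_subtype]
  congr 1
  apply Finset.filter_congr
  intro l _
  have hev : 0 ≤ hH.eigenvalues l :=
    (Matrix.posSemidef_conjTranspose_mul_self M).eigenvalues_nonneg l
  simp only [singVals, ne_eq, Real.sqrt_eq_zero']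
  constructor
  · intro h hc
    exact h (by rw [hc])
  · intro h hc
    exact h (le_antisymm hc hev)

theorem stmt6 {d n : ℕ} (hn : 2 ≤ n) (B : Fin d → Matrix (Fin n) (Fin n) ℂ)
    (hB1 : ∑ i, (B i)ᴴ * B i = (d : ℂ) • 1) (hB2 : ∑ i, B i * (B i)ᴴ = (d : ℂ) • 1)
    (p q : ℝ) (hq : 1 ≤ q) (hpq : q ≤ p) :
    hSp B p ≥ (hSp B q) ^ (p / q) := by
  have hq0 : 0 < q := lt_of_lt_of_le one_pos hq
  set r : ℝ := p / q with hrdef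
  have hr : 1 ≤ r := (one_le_div hq0).2 hpq
  have hr0 : 0 < r := lt_of_lt_of_le one_pos hr
  -- the defining sets
  set Sp := { x : ℝ | ∃ P : Matrix (Fin n) (Fin n) ℂ, Pᴴ = P ∧ P * P = P ∧
    1 ≤ P.rank ∧ 2 * P.rank ≤ n ∧
    x = (∑ i, ∑ l, singVals (P * B i * (1 - P)) l ^ p) / (d * P.rank) } with hSpdef
  set Sq := { x : ℝ | ∃ P : Matrix (Fin n) (Fin n) ℂ, Pᴴ = P ∧ P * P = P ∧
    1 ≤ P.rank ∧ 2 * P.rank ≤ n ∧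
    x = (∑ i, ∑ l, singVals (P * B i * (1 - P)) l ^ q) / (d * P.rank) } with hSqdef
  -- a witness projection of rank one
  haveI : NeZero n := ⟨by omega⟩
  have hwitness : ∀ s : ℝ, ∃ x, x ∈ { x : ℝ | ∃ P : Matrix (Fin n) (Fin n) ℂ,
      Pᴴ = P ∧ P * P = P ∧ 1 ≤ P.rank ∧ 2 * P.rank ≤ n ∧
      x = (∑ i, ∑ l, singVals (P * B i * (1 - P)) l ^ s) / (d * P.rank) } := by
    intro s
    set w : Fin n → ℂ := fun l => if l = 0 then 1 else 0 with hw
    set P : Matrix (Fin n) (Fin n) ℂ := Matrix.diagonal w with hP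
    have hrank : P.rank = 1 := by
      rw [hP, Matrix.rank_diagonal, Fintype.card_subtype]
      have : Finset.univ.filter (fun l => w l ≠ 0) = {(0 : Fin n)} := by
        ext l
        by_cases h : l = 0 <;> simp [hw, h]
      rw [this, Finset.card_singleton]
    refine ⟨_, P, ?_, ?_, ?_, ?_, rfl⟩
    · have hsw : star w = w := by
        funext l
        by_cases h : l = 0 <;> simp [hw, h]
      rw [hP, Matrix.diagonal_conjTranspose, hsw]
    · have hww : w * w = w := by
        funext l
        by_cases h : l = 0 <;> simp [hw, h]
      rw [hP, Matrix.diagonal_mul_diagonal]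
      exact congrArg Matrix.diagonal hww
    · rw [hrank]
    · rw [hrank]; omega
  -- elements of the sets are nonnegative
  have hmem_nonneg : ∀ s : ℝ, ∀ x ∈ { x : ℝ | ∃ P : Matrix (Fin n) (Fin n) ℂ,
      Pᴴ = P ∧ P * P = P ∧ 1 ≤ P.rank ∧ 2 * P.rank ≤ n ∧
      x = (∑ i, ∑ l, singVals (P * B i * (1 - P)) l ^ s) / (d * P.rank) }, 0 ≤ x := by
    rintro s x ⟨P, _, _, _, _, rfl⟩
    apply div_nonneg
    · apply Finset.sum_nonneg
      intro i _
      apply Finset.sum_nonneg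
      intro l _
      exact Real.rpow_nonneg (singVals_nonneg _ _) _
    · positivity
  have hSq_bdd : BddBelow Sq := ⟨0, fun x hx => hmem_nonneg q x hx⟩
  have hSq_ne : Sq.Nonempty := hwitness q
  have hSq_nonneg : 0 ≤ sInf Sq := le_csInf hSq_ne (fun x hx => hmem_nonneg q x hx)
  -- it suffices to bound each element of Sp
  rw [ge_iff_le, hSp, hSp]
  apply le_csInf (hwitness p)
  rintro x ⟨P, hPH, hPP, hk1, hk2, rfl⟩
  set k := P.rank with hk
  set σ : Fin d → Fin n → ℝ := fun i l => singVals (P * B i * (1 - P)) l with hσ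
  have hσ0 : ∀ i l, 0 ≤ σ i l := fun i l => singVals_nonneg _ _
  set A : ℝ := ∑ i, ∑ l, σ i l ^ p with hA
  set Bq : ℝ := ∑ i, ∑ l, σ i l ^ q with hBq
  have hA0 : 0 ≤ A := by
    apply Finset.sum_nonneg; intro i _; apply Finset.sum_nonneg; intro l _
    exact Real.rpow_nonneg (hσ0 i l) _
  have hBq0 : 0 ≤ Bq := by
    apply Finset.sum_nonneg; intro i _; apply Finset.sum_nonneg; intro l _
    exact Real.rpow_nonneg (hσ0 i l) _
  have hy_mem : Bq / (d * k) ∈ Sq := ⟨P, hPH, hPP, hk1, hk2, rfl⟩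
  have hy0 : 0 ≤ Bq / (d * k) := hmem_nonneg q _ hy_mem
  have step1 : sInf Sq ^ r ≤ (Bq / (d * k)) ^ r :=
    Real.rpow_le_rpow hSq_nonneg (csInf_le hSq_bdd hy_mem) (le_of_lt hr0)
  refine le_trans step1 ?_
  -- per-projection inequality
  rcases Nat.eq_zero_or_pos d with hd | hd
  · subst hd
    have : Bq = 0 := by simp [hBq]
    have hA' : A = 0 := by simp [hA]
    simp [this, hA', Real.zero_rpow (ne_of_gt hr0)]
  · -- inner Jensen, per i
    have inner : ∀ i : Fin d, (∑ l, σ i l ^ q) ^ r ≤ (k : ℝ) ^ (r - 1) * ∑ l, σ i l ^ p := by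
      intro i
      set t := Finset.univ.filter (fun l => singVals (P * B i * (1 - P)) l ≠ 0) with ht
      have hcard : t.card ≤ k := by
        rw [ht, card_singVals_ne_zero]
        calc (P * B i * (1 - P)).rank ≤ (P * B i).rank := Matrix.rank_mul_le_left _ _
          _ ≤ P.rank := Matrix.rank_mul_le_left _ _
      have hsum_eq : ∑ l, σ i l ^ q = ∑ l ∈ t, σ i l ^ q := by
        symm
        apply Finset.sum_subset (Finset.subset_univ t)
        intro l _ hl
        rw [ht] at hl
        simp only [Finset.mem_filter, Finset.mem_univ, true_and, not_not] at hl
        rw [hσ]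
        simp only [hl]
        exact Real.zero_rpow (ne_of_gt hq0)
      have hJ := sum_rpow_le t (fun l => σ i l ^ q)
        (fun l _ => Real.rpow_nonneg (hσ0 i l) _) hr
      have hpow : ∀ l, (σ i l ^ q) ^ r = σ i l ^ p := by
        intro l
        rw [← Real.rpow_mul (hσ0 i l)]
        congr 1
        rw [hrdef]
        field_simp
      calc (∑ l, σ i l ^ q) ^ r = (∑ l ∈ t, σ i l ^ q) ^ r := by rw [hsum_eq]
        _ ≤ (t.card : ℝ) ^ (r - 1) * ∑ l ∈ t, (σ i l ^ q) ^ r := hJ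
        _ = (t.card : ℝ) ^ (r - 1) * ∑ l ∈ t, σ i l ^ p := by
            congr 1
            exact Finset.sum_congr rfl (fun l _ => hpow l)
        _ ≤ (k : ℝ) ^ (r - 1) * ∑ l, σ i l ^ p := by
            apply mul_le_mul
            · exact Real.rpow_le_rpow (by positivity) (by exact_mod_cast hcard) (by linarith)
            · exact Finset.sum_le_sum_of_subset_of_nonneg (Finset.subset_univ t)
                (fun l _ _ => Real.rpow_nonneg (hσ0 i l) _)
            · exact Finset.sum_nonneg (fun l _ => Real.rpow_nonneg (hσ0 i l) _)
            · positivity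
    -- outer Jensen
    have outer : Bq ^ r ≤ (d : ℝ) ^ (r - 1) * ∑ i, (∑ l, σ i l ^ q) ^ r := by
      have := sum_rpow_le Finset.univ (fun i : Fin d => ∑ l, σ i l ^ q)
        (fun i _ => Finset.sum_nonneg (fun l _ => Real.rpow_nonneg (hσ0 i l) _)) hr
      rw [Finset.card_univ, Fintype.card_fin] at this
      exact this
    have key : Bq ^ r ≤ ((d : ℝ) * k) ^ (r - 1) * A := by
      calc Bq ^ r ≤ (d : ℝ) ^ (r - 1) * ∑ i, (∑ l, σ i l ^ q) ^ r := outer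
        _ ≤ (d : ℝ) ^ (r - 1) * ∑ i, ((k : ℝ) ^ (r - 1) * ∑ l, σ i l ^ p) := by
            apply mul_le_mul_of_nonneg_left _ (by positivity)
            exact Finset.sum_le_sum (fun i _ => inner i)
        _ = ((d : ℝ) * k) ^ (r - 1) * A := by
            rw [← Finset.mul_sum, ← mul_assoc,
              ← Real.mul_rpow (by positivity) (by positivity), hA]
    have hd' : (0:ℝ) < d := by exact_mod_cast hd
    have hk' : (0:ℝ) < k := by exact_mod_cast lt_of_lt_of_le one_pos hk1
    have hD : (0:ℝ) < (d : ℝ) * k := mul_pos hd' hk'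
    have hDr : (0:ℝ) < ((d : ℝ) * k) ^ r := Real.rpow_pos_of_pos hD r
    calc (Bq / ((d : ℝ) * k)) ^ r = Bq ^ r / ((d : ℝ) * k) ^ r :=
          Real.div_rpow hBq0 hD.le r
      _ ≤ (((d : ℝ) * k) ^ (r - 1) * A) / ((d : ℝ) * k) ^ r := by
          apply div_le_div_of_nonneg_right key hDr.le
      _ = A / ((d : ℝ) * k) := by
          rw [Real.rpow_sub hD, Real.rpow_one]
          field_simp
end

section
/- Let B = (B₁,...,B_d) be a bistochastic tuple and p ∈ [1,∞). Then h_{S_p}(B) ≤ d^{p/2} · h_D(B), where h_D is the dimension edge expansion. -/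
open scoped BigOperators
open Matrix Finset
open scoped ComplexOrder
open Pointwise

/-- Dimension edge expansion. -/
noncomputable def hD {d n : ℕ} (B : Fin d → Matrix (Fin n) (Fin n) ℂ) : ℝ :=
  sInf { x : ℝ | ∃ P : Matrix (Fin n) (Fin n) ℂ, Pᴴ = P ∧ P * P = P ∧
    1 ≤ P.rank ∧ 2 * P.rank ≤ n ∧
    x = (∑ i, ((P * B i * (1 - P)).rank : ℝ)) / (d * P.rank) }

lemma eig_le_of_psd {n : ℕ} {A : Matrix (Fin n) (Fin n) ℂ} (hA : A.IsHermitian) (c : ℝ)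
    (h : (((c : ℂ) • 1 - A)).PosSemidef) (i : Fin n) : hA.eigenvalues i ≤ c := by
  have h2 := h.re_dotProduct_nonneg (hA.eigenvectorBasis i)
  rw [sub_mulVec, smul_mulVec, one_mulVec, dotProduct_sub, map_sub,
    dotProduct_smul, smul_eq_mul] at h2
  have hnorm : dotProduct (star (hA.eigenvectorBasis i))
      ((hA.eigenvectorBasis i : EuclideanSpace ℂ (Fin n)) : Fin n → ℂ) = 1 := by
    have h1 := hA.eigenvectorBasis.orthonormal.1 i
    have h3 := EuclideanSpace.inner_eq_star_dotProduct (𝕜 := ℂ)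
      (hA.eigenvectorBasis i) (hA.eigenvectorBasis i)
    rw [inner_self_eq_norm_sq_to_K, h1] at h3
    simpa [WithLp.equiv, dotProduct_comm] using h3.symm
  have hev : hA.eigenvalues i
      = RCLike.re (star (hA.eigenvectorBasis i) ⬝ᵥ (A *ᵥ hA.eigenvectorBasis i)) :=
    hA.eigenvalues_eq i
  rw [hnorm, mul_one, ← hev] at h2
  have : RCLike.re ((c:ℝ) : ℂ) = c := by simp
  rw [this] at h2
  linarith

lemma proj_decomp {n : ℕ} (P C : Matrix (Fin n) (Fin n) ℂ) (d : ℂ)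
    (hP1 : Pᴴ = P) (hP2 : P * P = P) :
    d • 1 - (P * C * (1 - P))ᴴ * (P * C * (1 - P)) =
      ((1 - P) * C * (1 - P))ᴴ * ((1 - P) * C * (1 - P))
        + Pᴴ * (d • 1) * P
        + (1 - P)ᴴ * (d • 1 - Cᴴ * C) * (1 - P) := by
  have h2 : ∀ X : Matrix (Fin n) (Fin n) ℂ, P * (P * X) = P * X := fun X => by
    rw [← mul_assoc, hP2]
  simp only [conjTranspose_mul, conjTranspose_sub, conjTranspose_one, hP1]
  noncomm_ring
  simp only [h2, smul_sub, smul_add, smul_zero, mul_one, one_mul]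
  simp only [hP2, neg_smul, one_smul, neg_neg, smul_neg]
  abel

lemma psd_smul_one {n : ℕ} (d : ℕ) :
    ((d : ℂ) • (1 : Matrix (Fin n) (Fin n) ℂ)).PosSemidef := by
  have : (d : ℂ) • (1 : Matrix (Fin n) (Fin n) ℂ)
      = Matrix.diagonal (fun _ => (d : ℂ)) := by
    ext j k
    by_cases h : j = k <;> simp [Matrix.one_apply, Matrix.diagonal_apply, h]
  rw [this]
  refine Matrix.PosSemidef.diagonal fun j => ?_
  show (0:ℂ) ≤ (d:ℂ)
  exact_mod_cast Complex.zero_le_real.mpr (Nat.cast_nonneg d)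

lemma sum_singVals_le {d n : ℕ} (B : Fin d → Matrix (Fin n) (Fin n) ℂ)
    (hB1 : ∑ i, (B i)ᴴ * B i = (d : ℂ) • 1) {p : ℝ} (hp : 1 ≤ p)
    (P : Matrix (Fin n) (Fin n) ℂ) (hP1 : Pᴴ = P) (hP2 : P * P = P) (i : Fin d) :
    ∑ l, singVals (P * B i * (1 - P)) l ^ p
      ≤ (d : ℝ) ^ (p / 2) * ((P * B i * (1 - P)).rank : ℝ) := by
  classical
  set M := P * B i * (1 - P) with hM
  have hpsdA := Matrix.posSemidef_conjTranspose_mul_self M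
  -- the inner PSD matrix d•1 - Bᵢᴴ Bᵢ
  have hsum : (d : ℂ) • (1 : Matrix (Fin n) (Fin n) ℂ) - (B i)ᴴ * B i
      = ∑ j ∈ univ.erase i, (B j)ᴴ * B j := by
    rw [← hB1, ← Finset.add_sum_erase _ _ (mem_univ i)]
    exact add_sub_cancel_left _ _
  have hpsd_inner : ((d : ℂ) • (1 : Matrix (Fin n) (Fin n) ℂ) - (B i)ᴴ * B i).PosSemidef := by
    rw [hsum]
    refine Finset.sum_induction _ _ (fun a b ha hb => ha.add hb) Matrix.PosSemidef.zero
      fun j _ => Matrix.posSemidef_conjTranspose_mul_self _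
  have hpsd3 : ((1 - P)ᴴ * ((d : ℂ) • 1 - (B i)ᴴ * B i) * (1 - P)).PosSemidef :=
    hpsd_inner.conjTranspose_mul_mul_same _
  have hpsd2 : (Pᴴ * ((d : ℂ) • 1) * P).PosSemidef :=
    (psd_smul_one d).conjTranspose_mul_mul_same P
  have hpsd1 : (((1 - P) * B i * (1 - P))ᴴ * ((1 - P) * B i * (1 - P))).PosSemidef :=
    Matrix.posSemidef_conjTranspose_mul_self _
  have hbig : ((d : ℂ) • 1 - Mᴴ * M).PosSemidef := by
    rw [hM, proj_decomp P (B i) (d : ℂ) hP1 hP2]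
    exact (hpsd1.add hpsd2).add hpsd3
  have hbig' : ((((d:ℝ)) : ℂ) • 1 - Mᴴ * M).PosSemidef := by
    convert hbig using 3
    simp
  have heig_le : ∀ l, hpsdA.1.eigenvalues l ≤ (d : ℝ) :=
    fun l => eig_le_of_psd hpsdA.1 (d : ℝ) hbig' l
  have heig_nonneg : ∀ l, 0 ≤ hpsdA.1.eigenvalues l := hpsdA.eigenvalues_nonneg
  have hp0 : (0:ℝ) < p := lt_of_lt_of_le one_pos hp
  have hterm : ∀ l ∈ (univ : Finset (Fin n)), singVals M l ^ p
      ≤ if hpsdA.1.eigenvalues l = 0 then 0 else (d:ℝ) ^ (p/2) := by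
    intro l _
    by_cases h0 : hpsdA.1.eigenvalues l = 0
    · simp only [h0, if_pos]
      have : singVals M l = 0 := by
        simp [singVals, h0]
      rw [this, Real.zero_rpow (ne_of_gt hp0)]
    · simp only [h0, if_neg, not_false_iff]
      have h1 : singVals M l ≤ Real.sqrt (d : ℝ) := by
        simp only [singVals]
        exact Real.sqrt_le_sqrt (heig_le l)
      have h2 : singVals M l ^ p ≤ Real.sqrt (d : ℝ) ^ p :=
        Real.rpow_le_rpow (Real.sqrt_nonneg _) h1 (le_of_lt hp0)
      refine h2.trans_eq ?_
      rw [Real.sqrt_eq_rpow, ← Real.rpow_mul (Nat.cast_nonneg d)]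
      congr 1
      ring
  have hcount : (univ.filter fun l => ¬ hpsdA.1.eigenvalues l = 0).card = M.rank := by
    rw [← Matrix.rank_conjTranspose_mul_self M, hpsdA.1.rank_eq_card_non_zero_eigs,
      Fintype.card_subtype]
  calc ∑ l, singVals M l ^ p
      ≤ ∑ l, if hpsdA.1.eigenvalues l = 0 then 0 else (d:ℝ) ^ (p/2) :=
        Finset.sum_le_sum hterm
    _ = (d : ℝ) ^ (p / 2) * (M.rank : ℝ) := by
        rw [Finset.sum_ite, Finset.sum_const, Finset.sum_const, hcount]
        simp [mul_comm]

theorem stmt13 {d n : ℕ} (hn : 2 ≤ n) (B : Fin d → Matrix (Fin n) (Fin n) ℂ)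
    (hB1 : ∑ i, (B i)ᴴ * B i = (d : ℂ) • 1) (hB2 : ∑ i, B i * (B i)ᴴ = (d : ℂ) • 1)
    (p : ℝ) (hp : 1 ≤ p) :
    hSp B p ≤ (d : ℝ) ^ (p / 2) * hD B := by
  classical
  haveI : NeZero n := ⟨by omega⟩
  set c : ℝ := (d : ℝ) ^ (p / 2) with hc
  have hc0 : 0 ≤ c := Real.rpow_nonneg (Nat.cast_nonneg d) _
  set S1 : Set ℝ := { x : ℝ | ∃ P : Matrix (Fin n) (Fin n) ℂ, Pᴴ = P ∧ P * P = P ∧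
    1 ≤ P.rank ∧ 2 * P.rank ≤ n ∧
    x = (∑ i, ∑ l, singVals (P * B i * (1 - P)) l ^ p) / (d * P.rank) } with hS1
  set S2 : Set ℝ := { x : ℝ | ∃ P : Matrix (Fin n) (Fin n) ℂ, Pᴴ = P ∧ P * P = P ∧
    1 ≤ P.rank ∧ 2 * P.rank ≤ n ∧
    x = (∑ i, ((P * B i * (1 - P)).rank : ℝ)) / (d * P.rank) } with hS2
  -- the rank-one projection certificate
  set P₀ : Matrix (Fin n) (Fin n) ℂ :=
    Matrix.diagonal (fun j => if j = 0 then 1 else 0) with hP₀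
  have hP₀1 : P₀ᴴ = P₀ := by
    rw [hP₀, Matrix.diagonal_conjTranspose]
    refine congrArg Matrix.diagonal ?_
    funext j
    by_cases h : j = 0 <;> simp [h]
  have hP₀2 : P₀ * P₀ = P₀ := by
    rw [hP₀, Matrix.diagonal_mul_diagonal]
    refine congrArg Matrix.diagonal ?_
    funext j
    by_cases h : j = 0 <;> simp [h]
  have hrank : P₀.rank = 1 := by
    rw [hP₀, Matrix.rank_diagonal, Fintype.card_eq_one_iff]
    refine ⟨⟨0, by simp⟩, ?_⟩
    rintro ⟨b, hb⟩
    apply Subtype.ext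
    by_contra hb0
    exact hb (if_neg hb0)
  have hS2ne : S2.Nonempty :=
    ⟨_, P₀, hP₀1, hP₀2, by rw [hrank], by rw [hrank]; omega, rfl⟩
  have hbdd1 : BddBelow S1 := by
    refine ⟨0, ?_⟩
    rintro x ⟨P, h1, h2, h3, h4, rfl⟩
    have hnum : 0 ≤ ∑ i, ∑ l, singVals (P * B i * (1 - P)) l ^ p :=
      Finset.sum_nonneg fun i _ => Finset.sum_nonneg fun l _ =>
        Real.rpow_nonneg (Real.sqrt_nonneg _) _
    exact div_nonneg hnum (by positivity)
  have key : ∀ y ∈ S2, sInf S1 ≤ c * y := by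
    rintro y ⟨P, h1, h2, h3, h4, rfl⟩
    have hx : (∑ i, ∑ l, singVals (P * B i * (1 - P)) l ^ p) / (d * P.rank) ∈ S1 :=
      ⟨P, h1, h2, h3, h4, rfl⟩
    refine (csInf_le hbdd1 hx).trans ?_
    rw [← mul_div_assoc]
    have hN : (∑ i, ∑ l, singVals (P * B i * (1 - P)) l ^ p)
        ≤ c * ∑ i, ((P * B i * (1 - P)).rank : ℝ) := by
      rw [Finset.mul_sum]
      exact Finset.sum_le_sum fun i _ => sum_singVals_le B hB1 hp P h1 h2 i
    rcases eq_or_lt_of_le (show (0:ℝ) ≤ (d : ℝ) * (P.rank : ℝ) by positivity) with hD0 | hD0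
    · rw [← hD0, div_zero, div_zero]
    · gcongr
  have hle : sInf S1 ≤ sInf (c • S2) := by
    refine le_csInf (hS2ne.smul_set) ?_
    rintro b ⟨y, hy, rfl⟩
    simpa [smul_eq_mul] using key y hy
  rw [Real.sInf_smul_of_nonneg hc0] at hle
  simpa [hSp, hD, smul_eq_mul] using hle
end

section
/- Let B = (B₁,...,B_d) be a bistochastic tuple of n×n matrices and let p, q ∈ [1,∞). Then h_{S_p}(B) > 0 if and only if h_{S_q}(B) > 0; moreover, for a sequence of bistochastic d-tuples B_m, inf_m h_{S_p}(B_m) > 0 if and only if inf_m h_{S_q}(B_m) > 0. -/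
open scoped BigOperators
open Matrix Finset
open scoped ComplexOrder

namespace Aux19

/-- squared ℓ² norm of a complex vector -/
noncomputable def Nsq {n : ℕ} (x : Fin n → ℂ) : ℝ := ∑ j, Complex.normSq (x j)

lemma Nsq_nonneg {n : ℕ} (x : Fin n → ℂ) : 0 ≤ Nsq x :=
  Finset.sum_nonneg fun _ _ => Complex.normSq_nonneg _

lemma dot_self {n : ℕ} (x : Fin n → ℂ) : star x ⬝ᵥ x = (Nsq x : ℂ) := by
  simp only [dotProduct, Nsq, Pi.star_apply, Complex.ofReal_sum]
  exact Finset.sum_congr rfl fun j _ => by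
    rw [Complex.normSq_eq_conj_mul_self]; rfl

lemma dot_MtM {n : ℕ} (M : Matrix (Fin n) (Fin n) ℂ) (x : Fin n → ℂ) :
    star x ⬝ᵥ ((Mᴴ * M) *ᵥ x) = (Nsq (M *ᵥ x) : ℂ) := by
  rw [← Matrix.mulVec_mulVec, ← dot_self (M *ᵥ x), Matrix.star_mulVec,
    Matrix.dotProduct_mulVec]

end Aux19
namespace Aux19

lemma proj_compl {n : ℕ} {P : Matrix (Fin n) (Fin n) ℂ} (hP : Pᴴ = P) (hP2 : P * P = P) :
    (1 - P)ᴴ = 1 - P ∧ (1 - P) * (1 - P) = 1 - P := by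
  constructor
  · rw [conjTranspose_sub, conjTranspose_one, hP]
  · rw [sub_mul, mul_sub, mul_sub, one_mul, mul_one, hP2]
    rw [one_mul]
    abel

lemma Nsq_proj {n : ℕ} {P : Matrix (Fin n) (Fin n) ℂ} (hP : Pᴴ = P) (hP2 : P * P = P)
    (x : Fin n → ℂ) : Nsq (P *ᵥ x) ≤ Nsq x := by
  obtain ⟨hQ, hQ2⟩ := proj_compl hP hP2
  have h1 : (Nsq (P *ᵥ x) : ℂ) = star x ⬝ᵥ (P *ᵥ x) := by
    rw [← dot_MtM]; rw [hP, hP2]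
  have h2 : (Nsq ((1 - P) *ᵥ x) : ℂ) = star x ⬝ᵥ ((1 - P) *ᵥ x) := by
    rw [← dot_MtM]; rw [hQ, hQ2]
  have h3 : (Nsq (P *ᵥ x) : ℂ) + (Nsq ((1 - P) *ᵥ x) : ℂ) = (Nsq x : ℂ) := by
    rw [h1, h2, ← dotProduct_add, ← Matrix.add_mulVec]
    simp [dot_self]
  have h4 : Nsq (P *ᵥ x) + Nsq ((1 - P) *ᵥ x) = Nsq x := by exact_mod_cast h3
  linarith [Nsq_nonneg ((1 - P) *ᵥ x)]

lemma dot_mulVec_sum {n : ℕ} {ι : Type*} (s : Finset ι)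
    (A : ι → Matrix (Fin n) (Fin n) ℂ) (x : Fin n → ℂ) :
    ∑ j ∈ s, star x ⬝ᵥ (A j *ᵥ x) = star x ⬝ᵥ ((∑ j ∈ s, A j) *ᵥ x) := by
  induction s using Finset.cons_induction with
  | empty => simp
  | cons a s ha ih => simp [Finset.sum_cons, Matrix.add_mulVec, dotProduct_add, ih]

lemma Nsq_B {d n : ℕ} {B : Fin d → Matrix (Fin n) (Fin n) ℂ}
    (hB : ∑ i, (B i)ᴴ * B i = (d : ℂ) • 1) (i : Fin d) (x : Fin n → ℂ) :
    Nsq (B i *ᵥ x) ≤ d * Nsq x := by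
  have h3 : ((∑ j, Nsq (B j *ᵥ x) : ℝ) : ℂ) = (d : ℂ) * (Nsq x : ℂ) := by
    push_cast
    have : ∀ j : Fin d, (Nsq (B j *ᵥ x) : ℂ) = star x ⬝ᵥ (((B j)ᴴ * B j) *ᵥ x) :=
      fun j => (dot_MtM _ _).symm
    rw [Finset.sum_congr rfl fun j _ => this j, dot_mulVec_sum]
    rw [hB, Matrix.smul_mulVec, Matrix.one_mulVec, dotProduct_smul, dot_self]
    rfl
  have h4 : (∑ j, Nsq (B j *ᵥ x) : ℝ) = d * Nsq x := by exact_mod_cast h3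
  calc Nsq (B i *ᵥ x) ≤ ∑ j, Nsq (B j *ᵥ x) :=
        Finset.single_le_sum (f := fun j => Nsq (B j *ᵥ x)) (fun j _ => Nsq_nonneg _) (Finset.mem_univ i)
    _ = d * Nsq x := h4

end Aux19
namespace Aux19

lemma Nsq_eigenvector {n : ℕ} {A : Matrix (Fin n) (Fin n) ℂ} (hA : A.IsHermitian) (l : Fin n) :
    Nsq ⇑(hA.eigenvectorBasis l) = 1 := by
  have hnorm : ‖hA.eigenvectorBasis l‖ = 1 := hA.eigenvectorBasis.orthonormal.1 l
  have := EuclideanSpace.norm_eq (hA.eigenvectorBasis l)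
  rw [this] at hnorm
  have h2 : ∑ j, ‖hA.eigenvectorBasis l j‖ ^ 2 = 1 := by
    have h0 : (0:ℝ) ≤ ∑ j, ‖hA.eigenvectorBasis l j‖ ^ 2 :=
      Finset.sum_nonneg fun _ _ => sq_nonneg _
    nlinarith [Real.sq_sqrt h0]
  calc Nsq ⇑(hA.eigenvectorBasis l) = ∑ j, ‖hA.eigenvectorBasis l j‖ ^ 2 := by
        refine Finset.sum_congr rfl fun j _ => ?_
        rw [Complex.normSq_eq_norm_sq]
    _ = 1 := h2

lemma eigenvalue_eq_Nsq {n : ℕ} (M : Matrix (Fin n) (Fin n) ℂ) (l : Fin n) :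
    (Matrix.posSemidef_conjTranspose_mul_self M).1.eigenvalues l =
      Nsq (M *ᵥ ⇑((Matrix.posSemidef_conjTranspose_mul_self M).1.eigenvectorBasis l)) := by
  set hA := (Matrix.posSemidef_conjTranspose_mul_self M).1
  set v : Fin n → ℂ := ⇑(hA.eigenvectorBasis l) with hv
  have hmv : (Mᴴ * M) *ᵥ v = (hA.eigenvalues l : ℝ) • v := hA.mulVec_eigenvectorBasis l
  have h1 : star v ⬝ᵥ ((Mᴴ * M) *ᵥ v) = ((hA.eigenvalues l : ℝ) : ℂ) := by
    rw [hmv]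
    have : (hA.eigenvalues l : ℝ) • v = ((hA.eigenvalues l : ℝ) : ℂ) • v := by
      funext j; simp [Complex.real_smul]
    rw [this, dotProduct_smul, dot_self, Nsq_eigenvector]
    simp
  have h2 := dot_MtM M v
  rw [h1] at h2
  exact_mod_cast h2

lemma singVals_le_sqrt {d n : ℕ} {B : Fin d → Matrix (Fin n) (Fin n) ℂ}
    (hB : ∑ i, (B i)ᴴ * B i = (d : ℂ) • 1) {P : Matrix (Fin n) (Fin n) ℂ}
    (hP : Pᴴ = P) (hP2 : P * P = P) (i : Fin d) (l : Fin n) :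
    singVals (P * B i * (1 - P)) l ≤ Real.sqrt d := by
  set M := P * B i * (1 - P) with hM
  have key : ∀ x : Fin n → ℂ, Nsq (M *ᵥ x) ≤ d * Nsq x := by
    intro x
    obtain ⟨hQ, hQ2⟩ := proj_compl hP hP2
    have e1 : M *ᵥ x = P *ᵥ (B i *ᵥ ((1 - P) *ᵥ x)) := by
      rw [hM, ← Matrix.mulVec_mulVec, ← Matrix.mulVec_mulVec]
    calc Nsq (M *ᵥ x) = Nsq (P *ᵥ (B i *ᵥ ((1 - P) *ᵥ x))) := by rw [e1]
      _ ≤ Nsq (B i *ᵥ ((1 - P) *ᵥ x)) := Nsq_proj hP hP2 _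
      _ ≤ d * Nsq ((1 - P) *ᵥ x) := Nsq_B hB i _
      _ ≤ d * Nsq x := by
          have := Nsq_proj hQ hQ2 x
          have hd : (0:ℝ) ≤ d := Nat.cast_nonneg d
          nlinarith
  have heig : (Matrix.posSemidef_conjTranspose_mul_self M).1.eigenvalues l ≤ d := by
    rw [eigenvalue_eq_Nsq]
    calc Nsq (M *ᵥ _) ≤ d * Nsq _ := key _
      _ = d := by rw [Nsq_eigenvector]; ring
  exact Real.sqrt_le_sqrt heig

lemma singVals_nonneg {n : ℕ} (M : Matrix (Fin n) (Fin n) ℂ) (l : Fin n) :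
    0 ≤ singVals M l := Real.sqrt_nonneg _

lemma card_singVals_ne_zero {n : ℕ} (M : Matrix (Fin n) (Fin n) ℂ) :
    Fintype.card {l // singVals M l ≠ 0} = M.rank := by
  have hps := Matrix.posSemidef_conjTranspose_mul_self M
  have h1 : ∀ l, singVals M l ≠ 0 ↔ hps.1.eigenvalues l ≠ 0 := by
    intro l
    unfold singVals
    rw [not_iff_not]
    constructor
    · intro h
      have := hps.eigenvalues_nonneg l
      nlinarith [Real.sq_sqrt this, h]
    · intro h; rw [h, Real.sqrt_zero]
  calc Fintype.card {l // singVals M l ≠ 0}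
      = Fintype.card {l // hps.1.eigenvalues l ≠ 0} :=
        Fintype.card_congr (Equiv.subtypeEquivRight h1)
    _ = (Mᴴ * M).rank := (hps.1.rank_eq_card_non_zero_eigs).symm
    _ = M.rank := Matrix.rank_conjTranspose_mul_self M

lemma rank_PBQ_le {n : ℕ} (P A : Matrix (Fin n) (Fin n) ℂ) :
    (P * A * (1 - P)).rank ≤ P.rank :=
  le_trans (Matrix.rank_mul_le_left _ _) (Matrix.rank_mul_le_left _ _)

end Aux19
namespace Aux19

lemma sum_rpow_le {ι : Type*} [Fintype ι] (c : ι → ℝ) (hc : ∀ i, 0 ≤ c i) {t : ℝ}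
    (ht0 : 0 < t) (ht1 : t ≤ 1) (K : ℕ)
    (hK : (Finset.univ.filter fun i => c i ≠ 0).card ≤ K) :
    ∑ i, c i ^ t ≤ (K : ℝ) ^ (1 - t) * (∑ i, c i) ^ t := by
  classical
  set S := Finset.univ.filter fun i => c i ≠ 0 with hS
  have hzero : ∀ i ∈ Finset.univ, i ∉ S → c i = 0 := by
    intro i _ hi
    by_contra h
    exact hi (Finset.mem_filter.2 ⟨Finset.mem_univ i, h⟩)
  have hsum_t : ∑ i ∈ S, c i ^ t = ∑ i, c i ^ t := by
    refine Finset.sum_subset (Finset.subset_univ S) fun i hi hiS => ?_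
    rw [hzero i hi hiS, Real.zero_rpow ht0.ne']
  have hsum : ∑ i ∈ S, c i = ∑ i, c i := by
    refine Finset.sum_subset (Finset.subset_univ S) fun i hi hiS => hzero i hi hiS
  have hT0 : 0 ≤ ∑ i, c i := Finset.sum_nonneg fun i _ => hc i
  rcases S.eq_empty_or_nonempty with hSe | hSne
  · rw [← hsum_t, hSe, Finset.sum_empty]
    positivity
  · have hm : 0 < (S.card : ℝ) := by
      exact_mod_cast Finset.card_pos.2 hSne
    have hw' : ∑ _i ∈ S, ((S.card : ℝ))⁻¹ = 1 := by
      rw [Finset.sum_const, nsmul_eq_mul]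
      field_simp
    have hp1 : (1:ℝ) ≤ 1 / t := by
      rw [le_div_iff₀ ht0]; linarith
    have harith := Real.arith_mean_le_rpow_mean S (fun _ => ((S.card : ℝ))⁻¹)
      (fun i => c i ^ t) (fun i _ => by positivity) hw'
      (fun i _ => Real.rpow_nonneg (hc i) t) hp1
    have hsimp : ∀ i ∈ S, ((S.card : ℝ))⁻¹ * (c i ^ t) ^ (1/t) = ((S.card : ℝ))⁻¹ * c i := by
      intro i _
      rw [← Real.rpow_mul (hc i), mul_one_div_cancel ht0.ne', Real.rpow_one]
    rw [Finset.sum_congr rfl hsimp, one_div_one_div] at harith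
    rw [← Finset.mul_sum, ← Finset.mul_sum] at harith
    have step : ∑ i ∈ S, c i ^ t ≤ (S.card : ℝ) * (((S.card : ℝ))⁻¹ * ∑ i ∈ S, c i) ^ t := by
      have := mul_le_mul_of_nonneg_left harith hm.le
      calc ∑ i ∈ S, c i ^ t = (S.card : ℝ) * (((S.card : ℝ))⁻¹ * ∑ i ∈ S, c i ^ t) := by
            field_simp
        _ ≤ (S.card : ℝ) * (((S.card : ℝ))⁻¹ * ∑ i ∈ S, c i) ^ t := this
    have hTS : 0 ≤ ∑ i ∈ S, c i := Finset.sum_nonneg fun i _ => hc i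
    have expand : (S.card : ℝ) * (((S.card : ℝ))⁻¹ * ∑ i ∈ S, c i) ^ t
        = (S.card : ℝ) ^ (1 - t) * (∑ i ∈ S, c i) ^ t := by
      rw [Real.mul_rpow (by positivity) hTS, Real.inv_rpow hm.le,
        Real.rpow_sub hm, Real.rpow_one]
      ring
    have hcard : ((S.card : ℝ)) ^ (1 - t) ≤ (K : ℝ) ^ (1 - t) :=
      Real.rpow_le_rpow hm.le (by exact_mod_cast hK) (by linarith)
    calc ∑ i, c i ^ t = ∑ i ∈ S, c i ^ t := hsum_t.symm
      _ ≤ (S.card : ℝ) ^ (1 - t) * (∑ i ∈ S, c i) ^ t := by rw [← expand]; exact step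
      _ ≤ (K : ℝ) ^ (1 - t) * (∑ i, c i) ^ t := by
          rw [hsum]
          exact mul_le_mul_of_nonneg_right hcard (Real.rpow_nonneg hT0 t)

end Aux19
namespace Aux19

lemma xp_le_xq {d n : ℕ} {B : Fin d → Matrix (Fin n) (Fin n) ℂ}
    (hB : ∑ i, (B i)ᴴ * B i = (d : ℂ) • 1) {P : Matrix (Fin n) (Fin n) ℂ}
    (hP : Pᴴ = P) (hP2 : P * P = P) {p q : ℝ} (hq1 : 1 ≤ q) (hpq : q ≤ p) :
    ∑ i, ∑ l, singVals (P * B i * (1 - P)) l ^ p ≤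
      Real.sqrt d ^ (p - q) * ∑ i, ∑ l, singVals (P * B i * (1 - P)) l ^ q := by
  rw [Finset.mul_sum]
  refine Finset.sum_le_sum fun i _ => ?_
  rw [Finset.mul_sum]
  refine Finset.sum_le_sum fun l _ => ?_
  set a := singVals (P * B i * (1 - P)) l with ha
  have ha0 : 0 ≤ a := singVals_nonneg _ _
  have had : a ≤ Real.sqrt d := singVals_le_sqrt hB hP hP2 i l
  rcases eq_or_lt_of_le ha0 with h0 | h0
  · rw [← h0, Real.zero_rpow (by linarith : p ≠ 0)]
    positivity
  · have : a ^ p = a ^ (p - q) * a ^ q := by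
      rw [← Real.rpow_add h0]; ring_nf
    rw [this]
    have h1 : a ^ (p - q) ≤ Real.sqrt d ^ (p - q) :=
      Real.rpow_le_rpow ha0 had (by linarith)
    exact mul_le_mul_of_nonneg_right h1 (Real.rpow_nonneg ha0 q)

lemma xq_le_xp {d n : ℕ} (B : Fin d → Matrix (Fin n) (Fin n) ℂ)
    (P : Matrix (Fin n) (Fin n) ℂ) {p q : ℝ} (hq1 : 1 ≤ q) (hpq : q ≤ p) :
    ∑ i, ∑ l, singVals (P * B i * (1 - P)) l ^ q ≤
      ((d : ℝ) * (P.rank : ℝ)) ^ (1 - q / p) *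
        (∑ i, ∑ l, singVals (P * B i * (1 - P)) l ^ p) ^ (q / p) := by
  classical
  have hp0 : 0 < p := by linarith
  have hq0 : 0 < q := by linarith
  have ht0 : 0 < q / p := div_pos hq0 hp0
  have ht1 : q / p ≤ 1 := by rw [div_le_one hp0]; exact hpq
  set a : Fin d → Fin n → ℝ := fun i l => singVals (P * B i * (1 - P)) l with haa
  have ha0 : ∀ i l, 0 ≤ a i l := fun i l => singVals_nonneg _ _
  -- step 1 : inner sums
  have step1 : ∀ i, ∑ l, a i l ^ q ≤
      (P.rank : ℝ) ^ (1 - q / p) * (∑ l, a i l ^ p) ^ (q / p) := by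
    intro i
    have hcount : (Finset.univ.filter fun l => a i l ^ p ≠ 0).card ≤ P.rank := by
      have hfil : (Finset.univ.filter fun l => a i l ^ p ≠ 0) =
          (Finset.univ.filter fun l => a i l ≠ 0) := by
        refine Finset.filter_congr fun l _ => ?_
        rw [not_iff_not, Real.rpow_eq_zero (ha0 i l) hp0.ne']
      rw [hfil]
      have h1 : (Finset.univ.filter fun l => a i l ≠ 0).card =
          Fintype.card {l // a i l ≠ 0} := (Fintype.card_subtype _).symm
      rw [h1, card_singVals_ne_zero]
      exact rank_PBQ_le P (B i)
    have := sum_rpow_le (fun l => a i l ^ p) (fun l => Real.rpow_nonneg (ha0 i l) p)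
      ht0 ht1 P.rank hcount
    calc ∑ l, a i l ^ q = ∑ l, (a i l ^ p) ^ (q / p) := by
          refine Finset.sum_congr rfl fun l _ => ?_
          rw [← Real.rpow_mul (ha0 i l), mul_div_cancel₀ q hp0.ne']
      _ ≤ (P.rank : ℝ) ^ (1 - q / p) * (∑ l, a i l ^ p) ^ (q / p) := this
  -- step 2 : outer sum
  set y : Fin d → ℝ := fun i => ∑ l, a i l ^ p with hy
  have hy0 : ∀ i, 0 ≤ y i := fun i => Finset.sum_nonneg fun l _ => Real.rpow_nonneg (ha0 i l) p
  have step2 : ∑ i, y i ^ (q / p) ≤ (d : ℝ) ^ (1 - q / p) * (∑ i, y i) ^ (q / p) := by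
    have hcount : (Finset.univ.filter fun i => y i ≠ 0).card ≤ d := by
      calc (Finset.univ.filter fun i => y i ≠ 0).card ≤ (Finset.univ : Finset (Fin d)).card :=
            Finset.card_filter_le _ _
        _ = d := Finset.card_univ.trans (Fintype.card_fin d)
    exact sum_rpow_le y hy0 ht0 ht1 d hcount
  calc ∑ i, ∑ l, a i l ^ q ≤ ∑ i, (P.rank : ℝ) ^ (1 - q / p) * (y i) ^ (q / p) :=
        Finset.sum_le_sum fun i _ => step1 i
    _ = (P.rank : ℝ) ^ (1 - q / p) * ∑ i, (y i) ^ (q / p) := by rw [← Finset.mul_sum]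
    _ ≤ (P.rank : ℝ) ^ (1 - q / p) * ((d : ℝ) ^ (1 - q / p) * (∑ i, y i) ^ (q / p)) := by
        refine mul_le_mul_of_nonneg_left step2 (Real.rpow_nonneg (Nat.cast_nonneg _) _)
    _ = ((d : ℝ) * (P.rank : ℝ)) ^ (1 - q / p) * (∑ i, y i) ^ (q / p) := by
        rw [Real.mul_rpow (Nat.cast_nonneg _) (Nat.cast_nonneg _)]; ring

end Aux19
namespace Aux19

def ESet {d n : ℕ} (B : Fin d → Matrix (Fin n) (Fin n) ℂ) (p : ℝ) : Set ℝ :=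
  { x : ℝ | ∃ P : Matrix (Fin n) (Fin n) ℂ, Pᴴ = P ∧ P * P = P ∧
    1 ≤ P.rank ∧ 2 * P.rank ≤ n ∧
    x = (∑ i, ∑ l, singVals (P * B i * (1 - P)) l ^ p) / (d * P.rank) }

lemma hSp_eq {d n : ℕ} (B : Fin d → Matrix (Fin n) (Fin n) ℂ) (p : ℝ) :
    hSp B p = sInf (ESet B p) := rfl

lemma ESet_nonneg {d n : ℕ} {B : Fin d → Matrix (Fin n) (Fin n) ℂ} {p : ℝ} {x : ℝ}
    (hx : x ∈ ESet B p) : 0 ≤ x := by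
  obtain ⟨P, _, _, _, _, rfl⟩ := hx
  apply div_nonneg _ (by positivity)
  exact Finset.sum_nonneg fun i _ => Finset.sum_nonneg fun l _ =>
    Real.rpow_nonneg (singVals_nonneg _ _) p

lemma ESet_bddBelow {d n : ℕ} (B : Fin d → Matrix (Fin n) (Fin n) ℂ) (p : ℝ) :
    BddBelow (ESet B p) := ⟨0, fun _ hx => ESet_nonneg hx⟩

lemma hSp_nonneg {d n : ℕ} (B : Fin d → Matrix (Fin n) (Fin n) ℂ) (p : ℝ) :
    0 ≤ hSp B p :=
  Real.sInf_nonneg fun _ hx => ESet_nonneg hx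

lemma ESet_nonempty {d n : ℕ} (hn : 2 ≤ n) (B : Fin d → Matrix (Fin n) (Fin n) ℂ) (p : ℝ) :
    (ESet B p).Nonempty := by
  classical
  have h0 : 0 < n := by omega
  set z : Fin n := ⟨0, h0⟩ with hz
  set w : Fin n → ℂ := fun j => if j = z then 1 else 0 with hw
  set P : Matrix (Fin n) (Fin n) ℂ := Matrix.diagonal w with hPdef
  have hwstar : star w = w := by
    funext j; by_cases h : j = z <;> simp [hw, h]
  have hww : (fun i => w i * w i) = w := by
    funext j; by_cases h : j = z <;> simp [hw, h]
  have hP : Pᴴ = P := by rw [hPdef, Matrix.diagonal_conjTranspose, hwstar]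
  have hP2 : P * P = P := by rw [hPdef, Matrix.diagonal_mul_diagonal, hww]
  have hrank : P.rank = 1 := by
    rw [hPdef, Matrix.rank_diagonal]
    have h1 : ∀ j, w j ≠ 0 ↔ j = z := by
      intro j
      by_cases h : j = z <;> simp [hw, h]
    calc Fintype.card {j // w j ≠ 0} = Fintype.card {j // j = z} :=
          Fintype.card_congr (Equiv.subtypeEquivRight h1)
      _ = 1 := Fintype.card_subtype_eq z
  exact ⟨_, P, hP, hP2, by omega, by omega, rfl⟩

end Aux19
namespace Aux19

lemma hSp_div_le {d n : ℕ} (hn : 2 ≤ n) (hd : 1 ≤ d) {p q : ℝ} (hq1 : 1 ≤ q) (hpq : q ≤ p)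
    {B : Fin d → Matrix (Fin n) (Fin n) ℂ} (hB : ∑ i, (B i)ᴴ * B i = (d : ℂ) • 1) :
    hSp B p / (Real.sqrt d ^ (p - q)) ≤ hSp B q := by
  have hC : 0 < Real.sqrt d ^ (p - q) :=
    Real.rpow_pos_of_pos (Real.sqrt_pos.2 (by exact_mod_cast hd)) _
  rw [hSp_eq]
  refine le_csInf (ESet_nonempty hn B q) fun y hy => ?_
  obtain ⟨P, hP, hP2, hr1, hr2, rfl⟩ := hy
  have hdr : (0:ℝ) < (d : ℝ) * (P.rank : ℝ) := by
    have : (0:ℝ) < (d:ℝ) := by exact_mod_cast hd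
    have : (0:ℝ) < (P.rank : ℝ) := by exact_mod_cast hr1
    positivity
  have hx : (∑ i, ∑ l, singVals (P * B i * (1 - P)) l ^ p) / (d * P.rank) ∈ ESet B p :=
    ⟨P, hP, hP2, hr1, hr2, rfl⟩
  have h1 : hSp B p ≤ (∑ i, ∑ l, singVals (P * B i * (1 - P)) l ^ p) / (d * P.rank) :=
    csInf_le (ESet_bddBelow B p) hx
  have h2 : (∑ i, ∑ l, singVals (P * B i * (1 - P)) l ^ p) / (d * P.rank) ≤
      Real.sqrt d ^ (p - q) *
        ((∑ i, ∑ l, singVals (P * B i * (1 - P)) l ^ q) / (d * P.rank)) := by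
    rw [← mul_div_assoc]
    exact div_le_div_of_nonneg_right (xp_le_xq hB hP hP2 hq1 hpq) hdr.le |>.trans_eq rfl
  rw [div_le_iff₀ hC]
  calc hSp B p ≤ _ := h1
    _ ≤ _ := h2
    _ = _ := mul_comm _ _

lemma hSp_le_rpow {d n : ℕ} (hn : 2 ≤ n) (hd : 1 ≤ d) {p q : ℝ} (hq1 : 1 ≤ q) (hpq : q ≤ p)
    (B : Fin d → Matrix (Fin n) (Fin n) ℂ) {y : ℝ} (hy : y ∈ ESet B p) :
    hSp B q ≤ y ^ (q / p) := by
  obtain ⟨P, hP, hP2, hr1, hr2, rfl⟩ := hy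
  set Sp := ∑ i, ∑ l, singVals (P * B i * (1 - P)) l ^ p with hSpdef
  set Sq := ∑ i, ∑ l, singVals (P * B i * (1 - P)) l ^ q with hSqdef
  have hdr : (0:ℝ) < (d : ℝ) * (P.rank : ℝ) := by
    have h1 : (0:ℝ) < (d:ℝ) := by exact_mod_cast hd
    have h2 : (0:ℝ) < (P.rank : ℝ) := by exact_mod_cast hr1
    positivity
  have hSp0 : 0 ≤ Sp := Finset.sum_nonneg fun i _ => Finset.sum_nonneg fun l _ =>
    Real.rpow_nonneg (singVals_nonneg _ _) p
  have hxq : Sq / (d * P.rank) ∈ ESet B q := ⟨P, hP, hP2, hr1, hr2, rfl⟩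
  have h1 : hSp B q ≤ Sq / (d * P.rank) := csInf_le (ESet_bddBelow B q) hxq
  have key : Sq / ((d : ℝ) * (P.rank : ℝ)) ≤ (Sp / ((d : ℝ) * (P.rank : ℝ))) ^ (q / p) := by
    rw [Real.div_rpow hSp0 hdr.le]
    rw [div_le_div_iff₀ hdr (Real.rpow_pos_of_pos hdr _)]
    have h := xq_le_xp B P hq1 hpq
    calc Sq * ((d : ℝ) * (P.rank : ℝ)) ^ (q / p)
        ≤ (((d : ℝ) * (P.rank : ℝ)) ^ (1 - q / p) * Sp ^ (q / p)) *
            ((d : ℝ) * (P.rank : ℝ)) ^ (q / p) :=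
          mul_le_mul_of_nonneg_right h (Real.rpow_nonneg hdr.le _)
      _ = Sp ^ (q / p) * (((d : ℝ) * (P.rank : ℝ)) ^ (1 - q / p) *
            ((d : ℝ) * (P.rank : ℝ)) ^ (q / p)) := by ring
      _ = Sp ^ (q / p) * ((d : ℝ) * (P.rank : ℝ)) := by
          rw [← Real.rpow_add hdr]
          norm_num
  calc hSp B q ≤ Sq / (d * P.rank) := h1
    _ ≤ _ := by exact_mod_cast key

lemma hSp_of_d_zero {n : ℕ} (hn : 2 ≤ n) (B : Fin 0 → Matrix (Fin n) (Fin n) ℂ) (p : ℝ) :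
    hSp B p = 0 := by
  have hall : ∀ x ∈ ESet B p, x = 0 := by
    rintro x ⟨P, _, _, _, _, rfl⟩
    simp
  obtain ⟨x, hx⟩ := ESet_nonempty hn B p
  have hx0 : (0:ℝ) ∈ ESet B p := by rw [← hall x hx]; exact hx
  exact le_antisymm (csInf_le (ESet_bddBelow B p) hx0) (hSp_nonneg B p)

lemma hSp_rpow_le {d n : ℕ} (hn : 2 ≤ n) (hd : 1 ≤ d) {p q : ℝ} (hp1 : 1 ≤ p) (hq1 : 1 ≤ q)
    (hpq : q ≤ p) (B : Fin d → Matrix (Fin n) (Fin n) ℂ) :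
    hSp B q ^ (p / q) ≤ hSp B p := by
  rw [hSp_eq B p]
  refine le_csInf (ESet_nonempty hn B p) fun y hy => ?_
  have h1 : hSp B q ≤ y ^ (q / p) := hSp_le_rpow hn hd hq1 hpq B hy
  have hy0 : 0 ≤ y := ESet_nonneg hy
  calc hSp B q ^ (p / q) ≤ (y ^ (q / p)) ^ (p / q) :=
        Real.rpow_le_rpow (hSp_nonneg B q) h1 (by positivity)
    _ = y := by
        have hqp : q / p * (p / q) = 1 := by
          rw [div_mul_div_comm, mul_comm]
          exact div_self (mul_pos (by linarith : (0:ℝ) < p) (by linarith : (0:ℝ) < q)).ne'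
        rw [← Real.rpow_mul hy0, hqp, Real.rpow_one]

lemma iff_of_le {d n : ℕ} (hn : 2 ≤ n) {p q : ℝ} (hp1 : 1 ≤ p) (hq1 : 1 ≤ q) (hpq : q ≤ p)
    (B : Fin d → Matrix (Fin n) (Fin n) ℂ) (hB : ∑ i, (B i)ᴴ * B i = (d : ℂ) • 1) :
    (0 < hSp B p ↔ 0 < hSp B q) := by
  rcases Nat.eq_zero_or_pos d with hd | hd
  · subst hd
    rw [hSp_of_d_zero hn B p, hSp_of_d_zero hn B q]
  · have hC : 0 < Real.sqrt d ^ (p - q) :=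
      Real.rpow_pos_of_pos (Real.sqrt_pos.2 (by exact_mod_cast hd)) _
    constructor
    · intro h
      exact lt_of_lt_of_le (div_pos h hC) (hSp_div_le hn hd hq1 hpq hB)
    · intro h
      exact lt_of_lt_of_le (Real.rpow_pos_of_pos h _) (hSp_rpow_le hn hd hp1 hq1 hpq B)

end Aux19
namespace Aux19

lemma inf_iff_of_le {d : ℕ} {p q : ℝ} (hp1 : 1 ≤ p) (hq1 : 1 ≤ q) (hpq : q ≤ p)
    (N : ℕ → ℕ) (hN : ∀ m, 2 ≤ N m)
    (B : (m : ℕ) → Fin d → Matrix (Fin (N m)) (Fin (N m)) ℂ)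
    (hB : ∀ m, ∑ i, (B m i)ᴴ * B m i = (d : ℂ) • 1) :
    (0 < ⨅ m, hSp (B m) p ↔ 0 < ⨅ m, hSp (B m) q) := by
  rcases Nat.eq_zero_or_pos d with hd | hd
  · subst hd
    have hzp : ∀ m, hSp (B m) p = 0 := fun m => hSp_of_d_zero (hN m) _ p
    have hzq : ∀ m, hSp (B m) q = 0 := fun m => hSp_of_d_zero (hN m) _ q
    simp only [hzp, hzq, ciInf_const]
  · have hd1 : 1 ≤ d := hd
    have hC : 0 < Real.sqrt d ^ (p - q) :=
      Real.rpow_pos_of_pos (Real.sqrt_pos.2 (by exact_mod_cast hd)) _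
    have bddp : BddBelow (Set.range fun m => hSp (B m) p) := by
      refine ⟨0, ?_⟩; rintro x ⟨m, rfl⟩; exact hSp_nonneg _ _
    have bddq : BddBelow (Set.range fun m => hSp (B m) q) := by
      refine ⟨0, ?_⟩; rintro x ⟨m, rfl⟩; exact hSp_nonneg _ _
    constructor
    · intro h
      have hle : ∀ m, (⨅ k, hSp (B k) p) / (Real.sqrt d ^ (p - q)) ≤ hSp (B m) q := fun m =>
        le_trans (div_le_div_of_nonneg_right (ciInf_le bddp m) hC.le |>.trans_eq rfl)
          (hSp_div_le (hN m) hd1 hq1 hpq (hB m))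
      exact lt_of_lt_of_le (div_pos h hC) (le_ciInf hle)
    · intro h
      have hinf0 : 0 ≤ ⨅ k, hSp (B k) q := Real.iInf_nonneg fun k => hSp_nonneg _ _
      have hle : ∀ m, (⨅ k, hSp (B k) q) ^ (p / q) ≤ hSp (B m) p := fun m =>
        le_trans (Real.rpow_le_rpow hinf0 (ciInf_le bddq m) (by positivity))
          (hSp_rpow_le (hN m) hd1 hp1 hq1 hpq (B m))
      exact lt_of_lt_of_le (Real.rpow_pos_of_pos h _) (le_ciInf hle)

end Aux19

theorem stmt19 {d : ℕ} (p q : ℝ) (hp : 1 ≤ p) (hq : 1 ≤ q) :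
    (∀ n : ℕ, 2 ≤ n → ∀ B : Fin d → Matrix (Fin n) (Fin n) ℂ,
      (∑ i, (B i)ᴴ * B i = (d : ℂ) • 1) → (∑ i, B i * (B i)ᴴ = (d : ℂ) • 1) →
      (0 < hSp B p ↔ 0 < hSp B q)) ∧
    (∀ (N : ℕ → ℕ), (∀ m, 2 ≤ N m) →
      ∀ B : (m : ℕ) → Fin d → Matrix (Fin (N m)) (Fin (N m)) ℂ,
      (∀ m, ∑ i, (B m i)ᴴ * B m i = (d : ℂ) • 1) →
      (∀ m, ∑ i, B m i * (B m i)ᴴ = (d : ℂ) • 1) →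
      (0 < ⨅ m, hSp (B m) p ↔ 0 < ⨅ m, hSp (B m) q)) := by
  constructor
  · intro n hn B hB1 _hB2
    rcases le_total q p with hpq | hpq
    · exact Aux19.iff_of_le hn hp hq hpq B hB1
    · exact (Aux19.iff_of_le hn hq hp hpq B hB1).symm
  · intro N hN B hB1 _hB2
    rcases le_total q p with hpq | hpq
    · exact Aux19.inf_iff_of_le hp hq hpq N hN B hB1
    · exact (Aux19.inf_iff_of_le hq hp hpq N hN B hB1).symm
end
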